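/- Let F be a field of characteristic 0 equipped with a derivation D : F → F. Let k ≥ 2 be a natural number and let R, T, σ, τ, b_k ∈ F with T ≠ 0 and b_k ≠ 0, and suppose σ · D(b_k) · T + τ · b_k = R. Set b = T · b_k^k. Then R/b = D( −σ / ((k−1) · b_k^{k−1}) ) + ( τ + D(σ)·T/(k−1) ) / ( T · b_k^{k−1} ). (This is the identity underlying one step of Hermite reduction: the remaining fraction has denominator b/b_k = T·b_k^{k−1}, whose multiplicity in b_k is reduced by one.) -/
import Mathlib


/-- A derivation on a field: an additive map satisfying the Leibniz rule. -/
structure IsDerivation {F : Type*} [Field F] (D : F → F) : Prop where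
  map_add : ∀ a b : F, D (a + b) = D a + D b
  leibniz : ∀ a b : F, D (a * b) = a * D b + b * D a

lemma isDeriv_zero {F : Type*} [Field F] {D : F → F} (hD : IsDerivation D) :
    D 0 = 0 := by
  have := hD.map_add 0 0
  simp at this
  exact this

lemma isDeriv_neg {F : Type*} [Field F] {D : F → F} (hD : IsDerivation D) (a : F) :
    D (-a) = -D a := by
  have := hD.map_add a (-a)
  simp [isDeriv_zero hD] at this
  linear_combination -this

lemma isDeriv_one {F : Type*} [Field F] {D : F → F} (hD : IsDerivation D) :
    D 1 = 0 := by
  have := hD.leibniz 1 1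
  simp at this
  exact this

lemma isDeriv_pow {F : Type*} [Field F] {D : F → F} (hD : IsDerivation D) (a : F) :
    ∀ n : ℕ, D (a ^ (n + 1)) = (n + 1 : F) * a ^ n * D a := by
  intro n
  induction n with
  | zero => simp
  | succ m ih =>
    have : a ^ (m + 2) = a * a ^ (m + 1) := by ring
    rw [this, hD.leibniz, ih]
    push_cast
    ring

lemma isDeriv_inv {F : Type*} [Field F] {D : F → F} (hD : IsDerivation D)
    {a : F} (ha : a ≠ 0) : D a⁻¹ = -D a / a ^ 2 := by
  have h : D (a * a⁻¹) = 0 := by rw [mul_inv_cancel₀ ha, isDeriv_one hD]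
  rw [hD.leibniz] at h
  rw [eq_div_iff (pow_ne_zero 2 ha)]
  linear_combination a * h - D a * mul_inv_cancel₀ ha

lemma isDeriv_div {F : Type*} [Field F] {D : F → F} (hD : IsDerivation D)
    (x : F) {y : F} (hy : y ≠ 0) :
    D (x / y) = (D x * y - x * D y) / y ^ 2 := by
  rw [div_eq_mul_inv, hD.leibniz, isDeriv_inv hD hy]
  field_simp
  ring

theorem hermite_reduction_identity {F : Type*} [Field F] [CharZero F]
    (D : F → F) (hD : IsDerivation D) (k : ℕ) (hk : 2 ≤ k)
    (R T σ τ bk : F) (hT : T ≠ 0) (hbk : bk ≠ 0)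
    (hdioph : σ * D bk * T + τ * bk = R)
    (b : F) (hb : b = T * bk ^ k) :
    R / b = D (-σ / (((k : F) - 1) * bk ^ (k - 1)))
      + (τ + D σ * T / ((k : F) - 1)) / (T * bk ^ (k - 1)) := by
  obtain ⟨n, rfl⟩ : ∃ n, k = n + 2 := ⟨k - 2, by omega⟩
  have hkF : ((n + 2 : ℕ) : F) - 1 = (n + 1 : F) := by push_cast; ring
  have hn1 : (n + 1 : F) ≠ 0 := by
    have : ((n + 1 : ℕ) : F) ≠ 0 := Nat.cast_ne_zero.mpr (by omega)
    push_cast at this; exact this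
  have hks : n + 2 - 1 = n + 1 := by omega
  have hden : (n + 1 : F) * bk ^ (n + 1) ≠ 0 :=
    mul_ne_zero hn1 (pow_ne_zero _ hbk)
  have hDden : D ((n + 1 : F) * bk ^ (n + 1)) =
      (n + 1 : F) * ((n + 1 : F) * bk ^ n * D bk) := by
    rw [hD.leibniz, isDeriv_pow hD]
    have : D ((n : F) + 1) = 0 := by
      have h1 : ((n : F) + 1) = ((n + 1 : ℕ) : F) := by push_cast; ring
      rw [h1]
      induction (n + 1) with
      | zero => simpa using isDeriv_zero hD
      | succ m ih =>
        push_cast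
        have := hD.map_add (m : F) 1
        rw [show ((m : F) + 1) = (m : F) + 1 from rfl, this, ih, isDeriv_one hD]
        ring
    rw [this]; ring
  rw [hks, hkF, hb, ← hdioph, isDeriv_div hD _ hden, isDeriv_neg hD, hDden]
  have h1 : (((n : F) + 1) * bk ^ (n + 1)) ^ 2 ≠ 0 := pow_ne_zero _ hden
  have h2 : T * bk ^ (n + 1) ≠ 0 := mul_ne_zero hT (pow_ne_zero _ hbk)
  have h3 : T * bk ^ (n + 2) ≠ 0 := mul_ne_zero hT (pow_ne_zero _ hbk)
  rw [div_add_div _ _ h1 h2, div_eq_div_iff h3 (mul_ne_zero h1 h2)]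
  field_simp
  ring
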